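/- arXiv:1904.10129 — 2 statements merged into one kernel-verified Lean document; each statement's English description precedes it below -/
import Mathlib

section
/- Let φ: ℝ → ℝ be smooth, positive and bounded with |φ'(x)| ≤ λ φ(x) for all x, where 0 < λ ≤ 1/10. Let f ∈ H²(ℝ) and u = f - f''. Then there exist constants c₁, C₁ > 0 depending only on λ (not on f) such that c₁ ∫_ℝ φ u² dx ≤ ∫_ℝ φ (f² + 2f'² + f''²) dx ≤ C₁ ∫_ℝ φ u² dx. -/
open Real MeasureTheory

open Filter Set Topology in
private theorem aux_L2_mul_integrable {f g : ℝ → ℝ} (hf : MemLp f 2 (volume : Measure ℝ))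
    (hg : MemLp g 2 (volume : Measure ℝ)) :
    Integrable (fun x => f x * g x) volume := by
  refine ((hf.integrable_sq.add hg.integrable_sq).const_mul (1/2)).mono'
    (hf.aestronglyMeasurable.mul hg.aestronglyMeasurable) ?_
  filter_upwards with x
  simp only [Pi.add_apply]
  rw [Real.norm_eq_abs]
  nlinarith [sq_nonneg (|f x| - |g x|), sq_abs (f x), sq_abs (g x), abs_mul (f x) (g x)]

open Filter Set Topology in
private theorem aux_integral_deriv_zero {g g' : ℝ → ℝ}
    (hd : ∀ x, HasDerivAt g (g' x) x) (hg : Integrable g volume) (hg' : Integrable g' volume) :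
    ∫ x, g' x = 0 := by
  have htop : Tendsto g atTop (𝓝 (limUnder atTop g)) :=
    tendsto_limUnder_of_hasDerivAt_of_integrableOn_Ioi (a := 0) (fun x _ => hd x) hg'.integrableOn
  have hbot : Tendsto g atBot (𝓝 (limUnder atBot g)) :=
    tendsto_limUnder_of_hasDerivAt_of_integrableOn_Iic (a := 0) (fun x _ => hd x) hg'.integrableOn
  have ht0 : limUnder atTop g = 0 := by
    apply IntegrableAtFilter.eq_zero_of_tendsto ⟨Ioi 0, Ioi_mem_atTop 0, hg.integrableOn⟩ ?_ htop
    intro s hs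
    rcases mem_atTop_sets.1 hs with ⟨b, hb⟩
    rw [← top_le_iff, ← Real.volume_Ici (a := b)]
    exact measure_mono hb
  have hb0 : limUnder atBot g = 0 := by
    apply IntegrableAtFilter.eq_zero_of_tendsto ⟨Iic 0, Iic_mem_atBot 0, hg.integrableOn⟩ ?_ hbot
    intro s hs
    rcases mem_atBot_sets.1 hs with ⟨b, hb⟩
    rw [← top_le_iff, ← Real.volume_Iic (a := b)]
    exact measure_mono hb
  have h1 : ∫ x in Ioi (0:ℝ), g' x = 0 - g 0 :=
    integral_Ioi_of_hasDerivAt_of_tendsto (hd 0).continuousAt.continuousWithinAt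
      (fun x _ => hd x) hg'.integrableOn (ht0 ▸ htop)
  have h2 : ∫ x in Iic (0:ℝ), g' x = g 0 - 0 :=
    integral_Iic_of_hasDerivAt_of_tendsto (hd 0).continuousAt.continuousWithinAt
      (fun x _ => hd x) hg'.integrableOn (hb0 ▸ hbot)
  rw [← intervalIntegral.integral_Iic_add_Ioi hg'.integrableOn hg'.integrableOn, h1, h2]
  ring

theorem equivalence_weighted_norms (lam : ℝ) (hlam0 : 0 < lam) (hlam : lam ≤ 1 / 10) :
    ∃ c₁ C₁ : ℝ, 0 < c₁ ∧ 0 < C₁ ∧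
      ∀ φ : ℝ → ℝ, ContDiff ℝ (⊤ : ℕ∞) φ → (∀ x : ℝ, 0 < φ x) →
        (∃ C : ℝ, ∀ x : ℝ, |φ x| ≤ C) →
        (∀ x : ℝ, |deriv φ x| ≤ lam * φ x) →
        ∀ f : ℝ → ℝ, ContDiff ℝ 2 f →
          MemLp f 2 (volume : Measure ℝ) →
          MemLp (deriv f) 2 (volume : Measure ℝ) →
          MemLp (deriv (deriv f)) 2 (volume : Measure ℝ) →
          c₁ * ∫ x : ℝ, φ x * (f x - deriv (deriv f) x) ^ 2
              ≤ (∫ x : ℝ, φ x * (f x ^ 2 + 2 * deriv f x ^ 2 + deriv (deriv f) x ^ 2)) ∧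
            (∫ x : ℝ, φ x * (f x ^ 2 + 2 * deriv f x ^ 2 + deriv (deriv f) x ^ 2))
              ≤ C₁ * ∫ x : ℝ, φ x * (f x - deriv (deriv f) x) ^ 2 := by
  refine ⟨1/2, 2, by norm_num, by norm_num, ?_⟩
  intro φ hφ hφpos hφbdd hφder f hf hfL2 hf1L2 hf2L2
  obtain ⟨C, hC⟩ := hφbdd
  -- differentiability facts
  have hf11 : ContDiff ℝ (1+1) f := by norm_num; exact hf
  have hfd : Differentiable ℝ f := (contDiff_succ_iff_deriv.mp hf11).1
  have hcd1 : ContDiff ℝ 1 (deriv f) := (contDiff_succ_iff_deriv.mp hf11).2.2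
  have hf1d : Differentiable ℝ (deriv f) := hcd1.differentiable one_ne_zero
  have hφd : Differentiable ℝ φ := hφ.differentiable (by simp)
  have hdfa : ∀ x, HasDerivAt f (deriv f x) x := fun x => (hfd x).hasDerivAt
  have hdf1a : ∀ x, HasDerivAt (deriv f) (deriv (deriv f) x) x := fun x => (hf1d x).hasDerivAt
  have hdφa : ∀ x, HasDerivAt φ (deriv φ x) x := fun x => (hφd x).hasDerivAt
  -- measurability
  have hφm : AEStronglyMeasurable φ volume := hφ.continuous.aestronglyMeasurable
  have hφ'm : AEStronglyMeasurable (deriv φ) volume :=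
    (measurable_deriv φ).aestronglyMeasurable
  -- bounds on φ and deriv φ
  have hφb : ∃ C', ∀ x, ‖φ x‖ ≤ C' := ⟨C, fun x => by rw [Real.norm_eq_abs]; exact hC x⟩
  have hφ'b : ∃ C', ∀ x, ‖deriv φ x‖ ≤ C' := by
    refine ⟨lam * C, fun x => ?_⟩
    rw [Real.norm_eq_abs]
    have h1 : φ x ≤ C := (le_abs_self _).trans (hC x)
    have := hφder x
    nlinarith
  -- integrability of products
  have iff1 : Integrable (fun x => f x * deriv f x) volume := aux_L2_mul_integrable hfL2 hf1L2
  have iff2 : Integrable (fun x => f x * deriv (deriv f) x) volume :=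
    aux_L2_mul_integrable hfL2 hf2L2
  have ifsq : Integrable (fun x => f x * f x) volume := aux_L2_mul_integrable hfL2 hfL2
  have if1sq : Integrable (fun x => deriv f x * deriv f x) volume :=
    aux_L2_mul_integrable hf1L2 hf1L2
  have if2sq : Integrable (fun x => deriv (deriv f) x * deriv (deriv f) x) volume :=
    aux_L2_mul_integrable hf2L2 hf2L2
  have iφfsq : Integrable (fun x => φ x * (f x * f x)) volume := ifsq.bdd_mul hφm (ae_of_all _ hφb.choose_spec)
  have iφf1sq : Integrable (fun x => φ x * (deriv f x * deriv f x)) volume :=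
    if1sq.bdd_mul hφm (ae_of_all _ hφb.choose_spec)
  have iφf2sq : Integrable (fun x => φ x * (deriv (deriv f) x * deriv (deriv f) x)) volume :=
    if2sq.bdd_mul hφm (ae_of_all _ hφb.choose_spec)
  have iφff1 : Integrable (fun x => φ x * (f x * deriv f x)) volume := iff1.bdd_mul hφm (ae_of_all _ hφb.choose_spec)
  have iφff2 : Integrable (fun x => φ x * (f x * deriv (deriv f) x)) volume :=
    iff2.bdd_mul hφm (ae_of_all _ hφb.choose_spec)
  have iφ'ff1 : Integrable (fun x => deriv φ x * (f x * deriv f x)) volume :=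
    iff1.bdd_mul hφ'm (ae_of_all _ hφ'b.choose_spec)
  -- integration by parts: ∫ (φ f f')' = 0
  have hgd : ∀ x, HasDerivAt (fun y => φ y * (f y * deriv f y))
      (deriv φ x * (f x * deriv f x) +
        φ x * (deriv f x * deriv f x + f x * deriv (deriv f) x)) x :=
    fun x => (hdφa x).mul ((hdfa x).mul (hdf1a x))
  have isum : Integrable (fun x => deriv f x * deriv f x + f x * deriv (deriv f) x) volume :=
    if1sq.add iff2
  have iφsum : Integrable (fun x => φ x * (deriv f x * deriv f x + f x * deriv (deriv f) x))
      volume := isum.bdd_mul hφm (ae_of_all _ hφb.choose_spec)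
  have hg'int : Integrable (fun x => deriv φ x * (f x * deriv f x) +
      φ x * (deriv f x * deriv f x + f x * deriv (deriv f) x)) volume := iφ'ff1.add iφsum
  have hzero : ∫ x, (deriv φ x * (f x * deriv f x) +
      φ x * (deriv f x * deriv f x + f x * deriv (deriv f) x)) = 0 :=
    aux_integral_deriv_zero hgd (iφff1) hg'int
  set A := ∫ x, φ x * (f x * f x) with hA_def
  set B := ∫ x, φ x * (deriv f x * deriv f x) with hB_def
  set D := ∫ x, φ x * (deriv (deriv f) x * deriv (deriv f) x) with hD_def
  set X := ∫ x, φ x * (f x * deriv (deriv f) x) with hX_def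
  set Y := ∫ x, deriv φ x * (f x * deriv f x) with hY_def
  -- from hzero: Y + B + X = 0
  have hYBX : Y + (B + X) = 0 := by
    have e : (fun x => φ x * (deriv f x * deriv f x + f x * deriv (deriv f) x))
        = fun x => φ x * (deriv f x * deriv f x) + φ x * (f x * deriv (deriv f) x) := by
      funext x; ring
    have iadd : Integrable (fun x => φ x * (deriv f x * deriv f x)
        + φ x * (f x * deriv (deriv f) x)) volume := iφf1sq.add iφff2
    rw [integral_add iφ'ff1 iφsum, e, integral_add iφf1sq iφff2] at hzero
    exact hzero
  -- expand the two main integrals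
  have hL : ∫ x, φ x * (f x - deriv (deriv f) x) ^ 2 = A - 2*X + D := by
    have e : ∀ x, φ x * (f x - deriv (deriv f) x) ^ 2
        = φ x * (f x * f x) - 2 * (φ x * (f x * deriv (deriv f) x))
          + φ x * (deriv (deriv f) x * deriv (deriv f) x) := fun x => by ring
    simp_rw [e]
    have i2 : Integrable (fun x => 2 * (φ x * (f x * deriv (deriv f) x))) volume :=
      iφff2.const_mul 2
    have isub : Integrable (fun x => φ x * (f x * f x)
        - 2 * (φ x * (f x * deriv (deriv f) x))) volume := iφfsq.sub i2
    rw [integral_add isub iφf2sq, integral_sub iφfsq i2, integral_const_mul]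
  have hE : ∫ x, φ x * (f x ^ 2 + 2 * deriv f x ^ 2 + deriv (deriv f) x ^ 2)
      = A + 2*B + D := by
    have e : ∀ x, φ x * (f x ^ 2 + 2 * deriv f x ^ 2 + deriv (deriv f) x ^ 2)
        = φ x * (f x * f x) + 2 * (φ x * (deriv f x * deriv f x))
          + φ x * (deriv (deriv f) x * deriv (deriv f) x) := fun x => by ring
    simp_rw [e]
    have i2 : Integrable (fun x => 2 * (φ x * (deriv f x * deriv f x))) volume :=
      iφf1sq.const_mul 2
    have iadd : Integrable (fun x => φ x * (f x * f x)
        + 2 * (φ x * (deriv f x * deriv f x))) volume := iφfsq.add i2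
    rw [integral_add iadd iφf2sq, integral_add iφfsq i2, integral_const_mul]
  -- nonnegativity
  have hA0 : 0 ≤ A := integral_nonneg fun x => mul_nonneg (hφpos x).le (mul_self_nonneg _)
  have hB0 : 0 ≤ B := integral_nonneg fun x => mul_nonneg (hφpos x).le (mul_self_nonneg _)
  have hD0 : 0 ≤ D := integral_nonneg fun x => mul_nonneg (hφpos x).le (mul_self_nonneg _)
  -- bound on Y
  have hYb : |Y| ≤ lam/2 * (A + B) := by
    have hptwise : ∀ x, |deriv φ x * (f x * deriv f x)|
        ≤ lam/2 * (φ x * (f x * f x) + φ x * (deriv f x * deriv f x)) := by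
      intro x
      have h1 := hφder x
      have h2 : (0:ℝ) < φ x := hφpos x
      have h3 : |deriv φ x * (f x * deriv f x)| = |deriv φ x| * (|f x| * |deriv f x|) := by
        rw [abs_mul, abs_mul]
      have h4 : |f x| * |deriv f x| ≤ (f x * f x + deriv f x * deriv f x) / 2 := by
        nlinarith [sq_nonneg (|f x| - |deriv f x|), sq_abs (f x), sq_abs (deriv f x)]
      have h5 : 0 ≤ |f x| * |deriv f x| := mul_nonneg (abs_nonneg _) (abs_nonneg _)
      rw [h3]
      have h6 : |deriv φ x| * (|f x| * |deriv f x|) ≤ lam * φ x * (|f x| * |deriv f x|) :=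
        mul_le_mul_of_nonneg_right h1 h5
      refine h6.trans ?_
      have h7 : 0 ≤ lam * φ x := by positivity
      nlinarith [mul_le_mul_of_nonneg_left h4 h7]
    have iabs : Integrable (fun x => |deriv φ x * (f x * deriv f x)|) volume := iφ'ff1.abs
    have iadd : Integrable (fun x => φ x * (f x * f x) + φ x * (deriv f x * deriv f x)) volume :=
      iφfsq.add iφf1sq
    have imaj : Integrable (fun x => lam/2 * (φ x * (f x * f x)
        + φ x * (deriv f x * deriv f x))) volume := iadd.const_mul (lam/2)
    calc |Y| = ‖∫ x, deriv φ x * (f x * deriv f x)‖ := (Real.norm_eq_abs _).symm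
      _ ≤ ∫ x, ‖deriv φ x * (f x * deriv f x)‖ := norm_integral_le_integral_norm _
      _ = ∫ x, |deriv φ x * (f x * deriv f x)| := by simp only [Real.norm_eq_abs]
      _ ≤ ∫ x, lam/2 * (φ x * (f x * f x) + φ x * (deriv f x * deriv f x)) :=
          integral_mono iabs imaj hptwise
      _ = lam/2 * (A + B) := by rw [integral_const_mul, integral_add iφfsq iφf1sq]
  rw [hL, hE]
  have hX : X = -Y - B := by linarith
  obtain ⟨hY1, hY2⟩ := abs_le.mp hYb
  have hmul : lam/2 * (A + B) ≤ 1/20 * (A + B) := by nlinarith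
  constructor <;> nlinarith
end

section
/- Let L ≥ 4, f ∈ H²(ℝ), and u = f - f''. Then ∫_ℝ sech²(x/L) u(x) f(x) dx ≥ (1/2) ∫_ℝ sech²(x/L) (f(x)² + f'(x)²) dx. -/
open Real MeasureTheory

theorem weighted_coercivity_sech (L : ℝ) (hL : 4 ≤ L)
    (f : ℝ → ℝ) (hf : ContDiff ℝ 2 f)
    (hf0 : MemLp f 2 (volume : Measure ℝ))
    (hf1 : MemLp (deriv f) 2 (volume : Measure ℝ))
    (hf2 : MemLp (deriv (deriv f)) 2 (volume : Measure ℝ))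
    (u : ℝ → ℝ) (hu : ∀ x : ℝ, u x = f x - deriv (deriv f) x) :
    (1 / 2) * ∫ x : ℝ, (1 / Real.cosh (x / L)) ^ 2 * (f x ^ 2 + deriv f x ^ 2)
      ≤ ∫ x : ℝ, (1 / Real.cosh (x / L)) ^ 2 * (u x * f x) := by
  have hL0 : (0:ℝ) < L := by linarith
  set w : ℝ → ℝ := fun x => (1 / Real.cosh (x / L)) ^ 2 with hw_def
  set W : ℝ → ℝ := fun x => 2 * (Real.cosh (x/L))⁻¹ *
      (-(Real.sinh (x/L) * (1/L)) / Real.cosh (x/L) ^ 2) with hW_def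
  have hcoshpos : ∀ x : ℝ, 0 < Real.cosh (x/L) := fun x => Real.cosh_pos _
  have hcoshne : ∀ x : ℝ, Real.cosh (x/L) ≠ 0 := fun x => (hcoshpos x).ne'
  have hw_nonneg : ∀ x, 0 ≤ w x := fun x => sq_nonneg _
  have hw_le_one : ∀ x, w x ≤ 1 := by
    intro x
    have h1 : 1 ≤ Real.cosh (x/L) := Real.one_le_cosh _
    have h2 : 1 / Real.cosh (x/L) ≤ 1 := by
      rw [div_le_one (hcoshpos x)]; exact h1
    have h0 : 0 ≤ 1 / Real.cosh (x/L) := by positivity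
    calc w x = (1 / Real.cosh (x/L)) ^ 2 := rfl
      _ ≤ 1 ^ 2 := by gcongr
      _ = 1 := one_pow 2
  -- derivative of w
  have hw_deriv : ∀ x : ℝ, HasDerivAt w (W x) x := by
    intro x
    have hc : HasDerivAt (fun y => Real.cosh (y / L)) (Real.sinh (x/L) * (1/L)) x :=
      ((hasDerivAt_id x).div_const L).cosh
    have hinv : HasDerivAt (fun y => (Real.cosh (y / L))⁻¹)
        (-(Real.sinh (x/L) * (1/L)) / Real.cosh (x/L) ^ 2) x := hc.inv (hcoshne x)
    have hsq : HasDerivAt (fun y => ((Real.cosh (y / L))⁻¹) ^ 2) (W x) x := by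
      simpa [hW_def] using hinv.fun_pow 2
    have heq : w = fun y => ((Real.cosh (y / L))⁻¹) ^ 2 := by
      funext y; simp [hw_def, one_div]
    rw [heq]; exact hsq
  -- bound on W
  have hW_bound : ∀ x, |W x| ≤ (1/2) * w x := by
    intro x
    set c := Real.cosh (x/L) with hc
    set s := Real.sinh (x/L) with hs
    have hcpos : 0 < c := Real.cosh_pos _
    have hsb : |s| ≤ c := by
      have h := Real.cosh_sq (x/L)
      exact abs_le.mpr (abs_le_of_sq_le_sq' (by nlinarith) hcpos.le)
    have hW : W x = -(2*s)/(L*c^3) := by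
      simp only [hW_def]; field_simp; ring_nf; rw [hc, hs]; simp only [div_eq_mul_inv]; ring
    have habs : |(-(2*s)/(L*c^3))| = 2*|s|/(L*c^3) := by
      rw [abs_div, abs_neg, abs_mul, abs_two, abs_of_pos (mul_pos hL0 (pow_pos hcpos 3))]
    have : w x = (1/c)^2 := rfl
    rw [hW, habs, this]
    calc 2 * |s| / (L * c^3) ≤ 2 * c / (L * c^3) := by gcongr
      _ = (2/L) * (1/c^2) := by field_simp [hcpos.ne']
      _ ≤ (1/2) * (1/c^2) := by
          have h24 : 2/L ≤ (1:ℝ)/2 := by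
            rw [div_le_div_iff₀ hL0 (by norm_num)]; linarith
          have h2 : (0:ℝ) ≤ 1/c^2 := by positivity
          exact mul_le_mul_of_nonneg_right h24 h2
      _ = (1/2) * (1/c)^2 := by rw [div_pow, one_pow]
  have hW_le : ∀ x, |W x| ≤ 1/2 := fun x =>
    (hW_bound x).trans (by nlinarith [hw_le_one x, hw_nonneg x])
  -- smoothness facts
  have hfd1 : ContDiff ℝ 1 (deriv f) := by
    have h2 : ContDiff ℝ (1+1) f := by norm_num; exact hf
    exact (contDiff_succ_iff_deriv.mp h2).2.2
  have hfc : Continuous f := hf.continuous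
  have hf'c : Continuous (deriv f) := hfd1.continuous
  have hf''c : Continuous (deriv (deriv f)) := hfd1.continuous_deriv le_rfl
  have hfdiff : ∀ x, HasDerivAt f (deriv f x) x :=
    fun x => (hf.differentiable (by norm_num) x).hasDerivAt
  have hf'diff : ∀ x, HasDerivAt (deriv f) (deriv (deriv f) x) x :=
    fun x => (hfd1.differentiable (by norm_num) x).hasDerivAt
  have hwc : Continuous w := by
    apply Continuous.pow
    exact continuous_const.div (Real.continuous_cosh.comp (continuous_id.div_const L))
      fun x => hcoshne x
  have hWc : Continuous W := by
    have h1 : Continuous fun x => Real.cosh (x/L) :=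
      Real.continuous_cosh.comp (continuous_id.div_const L)
    have h2 : Continuous fun x => Real.sinh (x/L) :=
      Real.continuous_sinh.comp (continuous_id.div_const L)
    exact (continuous_const.mul (h1.inv₀ fun x => hcoshne x)).mul
      (((h2.mul continuous_const).neg).div (h1.pow 2) fun x => pow_ne_zero 2 (hcoshne x))
  -- integrability of basic products
  have intF2 : Integrable (fun x => f x ^ 2) := hf0.integrable_sq
  have intF'2 : Integrable (fun x => deriv f x ^ 2) := hf1.integrable_sq
  have intF''2 : Integrable (fun x => deriv (deriv f) x ^ 2) := hf2.integrable_sq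
  have prod_int : ∀ (g h : ℝ → ℝ), Continuous g → Continuous h →
      Integrable (fun x => g x ^ 2) → Integrable (fun x => h x ^ 2) →
      Integrable (fun x => g x * h x) := by
    intro g h hg hh hg2 hh2
    refine Integrable.mono' (g := fun x => (g x ^ 2 + h x ^ 2)/2)
      ((hg2.add hh2).div_const 2) (hg.mul hh).aestronglyMeasurable ?_
    filter_upwards with x
    have := sq_nonneg (|g x| - |h x|)
    have habs : ‖g x * h x‖ = |g x| * |h x| := by rw [Real.norm_eq_abs, abs_mul]
    rw [habs]
    have h1 : |g x| ^ 2 = g x ^ 2 := sq_abs _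
    have h2 : |h x| ^ 2 = h x ^ 2 := sq_abs _
    nlinarith
  have intFF' : Integrable (fun x => f x * deriv f x) :=
    prod_int _ _ hfc hf'c intF2 intF'2
  have intFF'' : Integrable (fun x => f x * deriv (deriv f) x) :=
    prod_int _ _ hfc hf''c intF2 intF''2
  -- weighted integrabilities
  have int_wF2 : Integrable (fun x => w x * f x ^ 2) :=
    intF2.bdd_mul hwc.aestronglyMeasurable (c := 1) (Filter.Eventually.of_forall fun x => by
      rw [Real.norm_eq_abs, abs_of_nonneg (hw_nonneg x)]; exact hw_le_one x)
  have int_wF'2 : Integrable (fun x => w x * deriv f x ^ 2) :=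
    intF'2.bdd_mul hwc.aestronglyMeasurable (c := 1) (Filter.Eventually.of_forall fun x => by
      rw [Real.norm_eq_abs, abs_of_nonneg (hw_nonneg x)]; exact hw_le_one x)
  have int_wFF'' : Integrable (fun x => w x * (f x * deriv (deriv f) x)) :=
    intFF''.bdd_mul hwc.aestronglyMeasurable (c := 1) (Filter.Eventually.of_forall fun x => by
      rw [Real.norm_eq_abs, abs_of_nonneg (hw_nonneg x)]; exact hw_le_one x)
  have int_wFF' : Integrable (fun x => w x * (f x * deriv f x)) :=
    intFF'.bdd_mul hwc.aestronglyMeasurable (c := 1) (Filter.Eventually.of_forall fun x => by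
      rw [Real.norm_eq_abs, abs_of_nonneg (hw_nonneg x)]; exact hw_le_one x)
  have int_WFF' : Integrable (fun x => W x * (f x * deriv f x)) :=
    intFF'.bdd_mul hWc.aestronglyMeasurable (c := 1/2) (Filter.Eventually.of_forall fun x => hW_le x)
  -- the function g = w f f' and its derivative
  set g : ℝ → ℝ := fun x => w x * (f x * deriv f x) with hg_def
  set g' : ℝ → ℝ := fun x => W x * (f x * deriv f x)
      + w x * (deriv f x * deriv f x + f x * deriv (deriv f) x) with hg'_def
  have hg_deriv : ∀ x, HasDerivAt g (g' x) x := by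
    intro x
    have h1 : HasDerivAt (fun y => f y * deriv f y)
        (deriv f x * deriv f x + f x * deriv (deriv f) x) x :=
      (hfdiff x).mul (hf'diff x)
    simpa [hg_def, hg'_def] using (hw_deriv x).fun_mul h1
  have int_g : Integrable g := int_wFF'
  have int_g' : Integrable g' := by
    apply int_WFF'.add
    have : (fun x => w x * (deriv f x * deriv f x + f x * deriv (deriv f) x))
        = fun x => w x * deriv f x ^ 2 + w x * (f x * deriv (deriv f) x) := by
      funext x; ring
    rw [this]
    exact int_wF'2.add int_wFF''
  -- FTC on the whole line: ∫ g' = 0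
  have hzero : ∫ x : ℝ, g' x = 0 := by
    have htop : Filter.Tendsto g Filter.atTop (nhds 0) :=
      tendsto_zero_of_hasDerivAt_of_integrableOn_Ioi (a := 0)
        (fun x _ => hg_deriv x) int_g'.integrableOn int_g.integrableOn
    have hbot : Filter.Tendsto g Filter.atBot (nhds 0) :=
      tendsto_zero_of_hasDerivAt_of_integrableOn_Iic (a := 0)
        (fun x _ => hg_deriv x) int_g'.integrableOn int_g.integrableOn
    have h1 : ∫ x in Set.Iic (0:ℝ), g' x = g 0 - 0 :=
      integral_Iic_of_hasDerivAt_of_tendsto' (fun x _ => hg_deriv x)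
        int_g'.integrableOn hbot
    have h2 : ∫ x in Set.Ioi (0:ℝ), g' x = 0 - g 0 :=
      integral_Ioi_of_hasDerivAt_of_tendsto' (fun x _ => hg_deriv x)
        int_g'.integrableOn htop
    rw [← intervalIntegral.integral_Iic_add_Ioi (b := (0:ℝ)) int_g'.integrableOn int_g'.integrableOn,
      h1, h2]
    ring
  -- split ∫ g'
  have hsplit : (∫ x : ℝ, W x * (f x * deriv f x)) + (∫ x : ℝ, w x * deriv f x ^ 2)
      + (∫ x : ℝ, w x * (f x * deriv (deriv f) x)) = 0 := by
    have e1 : ∫ x : ℝ, g' x = (∫ x : ℝ, W x * (f x * deriv f x))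
        + ∫ x : ℝ, (w x * deriv f x ^ 2 + w x * (f x * deriv (deriv f) x)) := by
      rw [← integral_add int_WFF' (by
        have : (fun x => w x * deriv f x ^ 2 + w x * (f x * deriv (deriv f) x))
            = fun x => w x * (deriv f x * deriv f x + f x * deriv (deriv f) x) := by
          funext x; ring
        rw [this]
        have h2 : (fun x => w x * (deriv f x * deriv f x + f x * deriv (deriv f) x))
            = fun x => w x * deriv f x ^ 2 + w x * (f x * deriv (deriv f) x) := by
          funext x; ring
        rw [h2]
        exact int_wF'2.add int_wFF'')]
      apply integral_congr_ae
      filter_upwards with x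
      simp only [hg'_def]; ring
    rw [hzero] at e1
    rw [integral_add int_wF'2 int_wFF''] at e1
    linarith
  -- rewrite the RHS of the goal
  have hRHS : (∫ x : ℝ, w x * (u x * f x))
      = (∫ x : ℝ, w x * f x ^ 2) - ∫ x : ℝ, w x * (f x * deriv (deriv f) x) := by
    rw [← integral_sub int_wF2 int_wFF'']
    apply integral_congr_ae
    filter_upwards with x
    rw [hu x]; ring
  -- rewrite the LHS of the goal
  have hLHS : (∫ x : ℝ, w x * (f x ^ 2 + deriv f x ^ 2))
      = (∫ x : ℝ, w x * f x ^ 2) + ∫ x : ℝ, w x * deriv f x ^ 2 := by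
    rw [← integral_add int_wF2 int_wF'2]
    apply integral_congr_ae
    filter_upwards with x
    ring
  -- bound the cross term
  have hcross : -((1/4) * ((∫ x : ℝ, w x * f x ^ 2) + ∫ x : ℝ, w x * deriv f x ^ 2))
      ≤ ∫ x : ℝ, W x * (f x * deriv f x) := by
    have hpt : ∀ x, -((1/4) * (w x * f x ^ 2 + w x * deriv f x ^ 2))
        ≤ W x * (f x * deriv f x) := by
      intro x
      have h1 := hW_bound x
      have e1 : |W x * (f x * deriv f x)| = |W x| * |f x * deriv f x| := abs_mul _ _
      have e2 : |f x * deriv f x| = |f x| * |deriv f x| := abs_mul _ _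
      have h2 : |W x| * |f x * deriv f x| ≤ (1/2) * w x * |f x * deriv f x| :=
        mul_le_mul_of_nonneg_right h1 (abs_nonneg _)
      have h3 : (1/2) * w x * (|f x| * |deriv f x|)
          ≤ (1/4) * (w x * f x ^ 2 + w x * deriv f x ^ 2) := by
        have hs := sq_nonneg (|f x| - |deriv f x|)
        have ha : |f x| ^ 2 = f x ^ 2 := sq_abs _
        have hb : |deriv f x| ^ 2 = deriv f x ^ 2 := sq_abs _
        nlinarith [hw_nonneg x, abs_nonneg (f x), abs_nonneg (deriv f x)]
      have hfull : |W x * (f x * deriv f x)|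
          ≤ (1/4) * (w x * f x ^ 2 + w x * deriv f x ^ 2) := by
        rw [e2] at h2
        rw [e1, e2]
        linarith
      have hneg := neg_abs_le (W x * (f x * deriv f x))
      linarith
    have hmono : ∫ x : ℝ, -((1/4) * (w x * f x ^ 2 + w x * deriv f x ^ 2))
        ≤ ∫ x : ℝ, W x * (f x * deriv f x) := by
      apply integral_mono _ int_WFF' hpt
      exact (((int_wF2.add int_wF'2).const_mul (1/4)).neg)
    calc -((1/4) * ((∫ x : ℝ, w x * f x ^ 2) + ∫ x : ℝ, w x * deriv f x ^ 2))
        = ∫ x : ℝ, -((1/4) * (w x * f x ^ 2 + w x * deriv f x ^ 2)) := by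
          rw [integral_neg, integral_const_mul, integral_add int_wF2 int_wF'2]
      _ ≤ _ := hmono
  -- nonnegativity
  have hA : 0 ≤ ∫ x : ℝ, w x * f x ^ 2 :=
    integral_nonneg fun x => mul_nonneg (hw_nonneg x) (sq_nonneg _)
  have hB : 0 ≤ ∫ x : ℝ, w x * deriv f x ^ 2 :=
    integral_nonneg fun x => mul_nonneg (hw_nonneg x) (sq_nonneg _)
  -- finish
  rw [hRHS, hLHS]
  set A := ∫ x : ℝ, w x * f x ^ 2
  set B := ∫ x : ℝ, w x * deriv f x ^ 2
  set C := ∫ x : ℝ, W x * (f x * deriv f x)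
  set D := ∫ x : ℝ, w x * (f x * deriv (deriv f) x)
  -- hsplit : C + B + D = 0, hcross : -(1/4)(A+B) ≤ C
  linarith
end
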